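/- Let α ∈ 𝕋 be non-periodic under the doubling map, let n ≥ 1, and let x ∈ 𝕋 satisfy h^{n+1}(x) ≠ α (so that GCS_n(x) and GCS_{n−1}(h(x)) are both defined). Then h(GCS_n(x)) = GCS_{n−1}(h(x)). -/

import Mathlib

open Set MeasureTheory Filter
open scoped Classical

noncomputable section

/-- The circle `ℝ/ℤ`. -/
abbrev 𝕋 := AddCircle (1 : ℝ)

/-- The doubling map `h(x) = 2x` on the circle. -/
def dbl (x : 𝕋) : 𝕋 := x + x

/-- The representative of a point of the circle lying in `[0,1)`. -/
def rep (x : 𝕋) : ℝ := (AddCircle.equivIco 1 0 x : ℝ)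

/-- `⋆₁ = α/2`. -/
def star1 (α : 𝕋) : 𝕋 := ((rep α / 2 : ℝ) : 𝕋)

/-- `⋆₂ = α/2 + 1/2`. -/
def star2 (α : 𝕋) : 𝕋 := ((rep α / 2 + 1 / 2 : ℝ) : 𝕋)

/-- The closed semicircle `C(L) = {α/2 + t : t ∈ [0,1/2]}`. -/
def arcL (α : 𝕋) : Set 𝕋 := (fun t : ℝ => ((rep α / 2 + t : ℝ) : 𝕋)) '' Set.Icc 0 (1 / 2)

/-- The closed semicircle `C(R) = {α/2 + 1/2 + t : t ∈ [0,1/2]}`. -/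
def arcR (α : 𝕋) : Set 𝕋 :=
  (fun t : ℝ => ((rep α / 2 + 1 / 2 + t : ℝ) : 𝕋)) '' Set.Icc 0 (1 / 2)

/-- The open semicircle `{α/2 + t : t ∈ (0,1/2)}`. -/
def openArcL (α : 𝕋) : Set 𝕋 := (fun t : ℝ => ((rep α / 2 + t : ℝ) : 𝕋)) '' Set.Ioo 0 (1 / 2)

/-- The open semicircle `{α/2 + 1/2 + t : t ∈ (0,1/2)}`. -/
def openArcR (α : 𝕋) : Set 𝕋 :=
  (fun t : ℝ => ((rep α / 2 + 1 / 2 + t : ℝ) : 𝕋)) '' Set.Ioo 0 (1 / 2)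

/-- The alphabet `{L, R, ⋆}`. -/
inductive Letter | L | R | star
deriving DecidableEq

/-- `itin α x n` is the `(n+1)`-st letter of the itinerary `I^α(x)`. -/
def itin (α x : 𝕋) (n : ℕ) : Letter :=
  if dbl^[n] x = star1 α ∨ dbl^[n] x = star2 α then Letter.star
  else if dbl^[n] x ∈ openArcL α then Letter.L else Letter.R

/-- The lamination `x ≈_α y`. -/
def approx (α : 𝕋) (x y : 𝕋) : Prop :=
  ∀ n : ℕ, itin α x n = itin α y n ∨ itin α x n = Letter.star ∨ itin α y n = Letter.star

/-- A point is periodic under the doubling map. -/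
def IsPeriodicPt' (x : 𝕋) : Prop := ∃ k : ℕ, 1 ≤ k ∧ dbl^[k] x = x

/-- `α` is periodic under the doubling map. -/
def Periodic' (α : 𝕋) : Prop := IsPeriodicPt' α

/-- `α` is pre-periodic under the doubling map. -/
def PrePeriodic (α : 𝕋) : Prop := ∃ m : ℕ, IsPeriodicPt' (dbl^[m] α)

/-- `D` is a gluing link with `n` arcs with respect to `≈_α`: a disjoint union of `n` closed
arcs whose `2n` endpoints occur in counterclockwise cyclic order and are consecutively glued
by `≈_α`. -/
def IsGluingLink (α : 𝕋) (n : ℕ) (D : Set 𝕋) : Prop :=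
  0 < n ∧ ∃ s e : ℕ → ℝ,
    (∀ i < n, s i ≤ e i) ∧
    (∀ i j : ℕ, i < j → j < n → e i < s j) ∧
    (∀ i < n, ∀ j < n, e j < s i + 1) ∧
    D = ⋃ i ∈ Finset.range n, (fun t : ℝ => (t : 𝕋)) '' Set.Icc (s i) (e i) ∧
    (∀ i < n, approx α ((e i : ℝ) : 𝕋) ((s ((i + 1) % n) : ℝ) : 𝕋))

/-- `L̃(x)`: the `h`-preimage of `x` in the interior of `C(L)` (for `x ≠ α`). -/
def tldL (α x : 𝕋) : 𝕋 :=
  if ((rep x / 2 : ℝ) : 𝕋) ∈ openArcL α then ((rep x / 2 : ℝ) : 𝕋)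
  else ((rep x / 2 + 1 / 2 : ℝ) : 𝕋)

/-- `R̃(x)`: the `h`-preimage of `x` in the interior of `C(R)` (for `x ≠ α`). -/
def tldR (α x : 𝕋) : 𝕋 :=
  if ((rep x / 2 : ℝ) : 𝕋) ∈ openArcR α then ((rep x / 2 : ℝ) : 𝕋)
  else ((rep x / 2 + 1 / 2 : ℝ) : 𝕋)

/-- The inverse branch associated with a single letter of `{L,R}`
(`true` codes `L`, `false` codes `R`). -/
def tldB (α : 𝕋) (b : Bool) (x : 𝕋) : 𝕋 := if b then tldL α x else tldR α x

/-- `g̃ = g̃[1] ∘ ⋯ ∘ g̃[n]` for a word `g ∈ {L,R}^*`. -/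
def wtld (α : 𝕋) (g : List Bool) (x : 𝕋) : 𝕋 := g.foldr (fun b y => tldB α b y) x

/-- The embedding `e(θ) = exp(2πiθ)` of the circle into `ℂ`. -/
def emb (x : 𝕋) : ℂ := Complex.exp (2 * Real.pi * Complex.I * (rep x))

/-- The chord of a pair of points of the circle: the closed Euclidean segment joining their
images in `ℂ`. -/
def chord (a b : 𝕋) : Set ℂ := segment ℝ (emb a) (emb b)

/-- The union of all chords `l_g` for words `g ∈ {L,R}^n`. -/
def chordsUnion (α : 𝕋) (n : ℕ) : Set ℂ :=
  ⋃ g ∈ {g : List Bool | g.length = n},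
    chord (wtld α g (star1 α)) (wtld α g (star2 α))

/-- The closed unit disk minus the chords of level `n`. -/
def diskMinus (α : 𝕋) (n : ℕ) : Set ℂ := Metric.closedBall (0 : ℂ) 1 \ chordsUnion α n

/-- `C` is a generalized cylinder set of degree `n`: the trace on the circle of the closure of
a connected component of the closed unit disk minus the chords of level `n`. -/
def IsGCS (α : 𝕋) (n : ℕ) (C : Set 𝕋) : Prop :=
  ∃ z ∈ diskMinus α n,
    C = {x : 𝕋 | emb x ∈ closure (connectedComponentIn (diskMinus α n) z)}

/-- The closed region of the circle associated with a letter (`⋆` imposes no restriction). -/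
def semi (α : 𝕋) : Letter → Set 𝕋
  | Letter.L => arcL α
  | Letter.R => arcR α
  | Letter.star => Set.univ

/-- `C(u)` for a word `u ∈ {L,R,⋆}^m`. -/
def cylSet (α : 𝕋) (u : List Letter) : Set 𝕋 :=
  {x : 𝕋 | ∀ i < u.length, dbl^[i] x ∈ semi α (u.getD i Letter.star)}

/-- The digit sequence of `I(α) = I^α(α)` (0-indexed: `ia α n` is the `(n+1)`-st digit). -/
def ia (α : 𝕋) (n : ℕ) : Letter := itin α α n

/-- A set `ℛ ⊆ ℕ` of indices is `D`-rare. -/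
def DRare (D : ℕ) (R : Finset ℕ) : Prop :=
  ∀ i : ℕ, (R.filter (fun j => i ≤ j ∧ j ≤ i + D)).card ≤ 3

/-- The `i`-th digit (1-based) of `I(α)[1..n]` is `(D,ℛ)`-duplicating. -/
def DupDigit (α : 𝕋) (D : ℕ) (R : Finset ℕ) (n i : ℕ) : Prop :=
  ∃ a b : ℕ, 1 ≤ a ∧ a ≤ i ∧ i ≤ b ∧ b ≤ n ∧
    (∀ j, a ≤ j → j ≤ b → j ∉ R → ia α (j - 1) = ia α (j - a)) ∧
    (b = n ∨ D < b - a + 1)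


/-- `α` is strongly recurrent. -/
def StronglyRecurrent (α : 𝕋) : Prop :=
  ∀ D : ℕ, 0 < D → ∀ τ : ℝ, τ < 1 →
    ∃ n : ℕ, D < n ∧ ∃ R : Finset ℕ, R ⊆ Finset.Icc 1 n ∧ DRare D R ∧
      τ * n < ((Finset.Icc 1 n).filter (fun i => DupDigit α D R n i)).card

/-- `α` is weakly pre-periodic with period `k`. -/
def WeaklyPrePeriodicWith (α : 𝕋) (k : ℕ) : Prop :=
  1 ≤ k ∧ ∃ m : ℕ, 1 ≤ m ∧ ∃ X : Letter, (X = Letter.L ∨ X = Letter.R) ∧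
    ∀ n : ℕ, ia α (m + k * n - 1) = X

/-- `α` is weakly pre-periodic (for some period). -/
def WeaklyPrePeriodic (α : 𝕋) : Prop := ∃ k : ℕ, WeaklyPrePeriodicWith α k

end

/-! Off the chords, a generalized cylinder set is cut out by sign conditions: `y ∈ GCS_n(x)` iff,
for every chord of level `n`, `e(y)` lies on the same closed side of it as `e(x)`, because the
components of the disk minus the chords are the convex cells given by strict sign conditions.
For the chord joining `p, q ∈ ℝ/ℤ`, the side of `e(t)` is, up to a nonzero constant, the sign
of `sin π(t - p) · sin π(t - q)`.

Over a chord of level `n - 1` with endpoints `2p, 2q` lie two chords of level `n`: one joins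
`p, q` in the open semicircle `C(L)`, the other joins `p + 1/2, q + 1/2` in `C(R)`. By
`sin 2u = 2 sin u cos u`, the side function of the parent at `2t` is the product of the side
functions of the two children at `t`, which gives `h(GCS_n(x)) ⊆ GCS_{n-1}(h x)`. Conversely,
each child chord cuts off a cap inside its own semicircle, so a point `t` on the same side of the
parent as `x` but across one of the children lies in the open semicircle opposite to `x`. The two
preimages `t` and `t + 1/2` of a point lie in opposite semicircles, so they cannot both do this,
and one of them is in `GCS_n(x)`. -/

open Real Metric

def chordSide (A B w : ℂ) : ℝ := ((starRingEnd ℂ) (B - A) * (w - A)).im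

section ChordGeometry

lemma chordSide_eq (A B w : ℂ) :
    chordSide A B w = (B - A).re * (w - A).im - (B - A).im * (w - A).re := by
  simp only [chordSide, Complex.mul_im, Complex.conj_re, Complex.conj_im]
  ring

lemma continuous_chordSide (A B : ℂ) : Continuous (chordSide A B) := by
  simp only [funext (chordSide_eq A B)]
  fun_prop

lemma chordSide_smul_add_smul (A B u v : ℂ) {a b : ℝ} (hab : a + b = 1) :
    chordSide A B (a • u + b • v) = a * chordSide A B u + b * chordSide A B v := by
  obtain rfl : b = 1 - a := by linarith
  simp only [chordSide_eq, Complex.add_re, Complex.add_im, Complex.sub_re, Complex.sub_im,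
    Complex.smul_re, Complex.smul_im, smul_eq_mul]
  ring

variable {A B w : ℂ}

lemma chordSide_eq_zero_of_mem_segment (hw : w ∈ segment ℝ A B) : chordSide A B w = 0 := by
  rw [segment_eq_image'] at hw
  obtain ⟨t, -, rfl⟩ := hw
  simp only [chordSide_eq, Complex.add_re, Complex.add_im, Complex.sub_re, Complex.sub_im,
    Complex.smul_re, Complex.smul_im, smul_eq_mul]
  ring

lemma exists_eq_add_smul_of_chordSide_eq_zero (hAB : A ≠ B) (hw : chordSide A B w = 0) :
    ∃ t : ℝ, w = A + t • (B - A) := by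
  set r := (starRingEnd ℂ) (B - A) * (w - A)
  have hr : r = (r.re : ℂ) := Complex.ext (by simp) (by rw [Complex.ofReal_im]; exact hw)
  have hconj : (starRingEnd ℂ) (B - A) ≠ 0 := (map_ne_zero _).2 (sub_ne_zero.2 hAB.symm)
  refine ⟨r.re / Complex.normSq (B - A), ?_⟩
  rw [Complex.real_smul, Complex.ofReal_div, ← hr, Complex.normSq_eq_conj_mul_self]
  field_simp
  ring

lemma norm_add_smul_sub_sq {E : Type*} [NormedAddCommGroup E] [InnerProductSpace ℝ E]
    {A B : E} (hA : ‖A‖ = 1) (hB : ‖B‖ = 1) (t : ℝ) :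
    ‖A + t • (B - A)‖ ^ 2 = 1 - t * (1 - t) * ‖B - A‖ ^ 2 := by
  have h : 2 * inner ℝ A (B - A) = -‖B - A‖ ^ 2 := by
    rw [inner_sub_right, norm_sub_sq_real, real_inner_self_eq_norm_sq, real_inner_comm, hA, hB]
    ring
  rw [norm_add_sq_real, norm_smul, mul_pow, inner_smul_right, Real.norm_eq_abs, sq_abs, hA]
  linear_combination t * h

lemma mem_segment_of_chordSide_eq_zero (hA : ‖A‖ = 1) (hB : ‖B‖ = 1) (hAB : A ≠ B)
    (hw : ‖w‖ ≤ 1) (h : chordSide A B w = 0) : w ∈ segment ℝ A B := by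
  obtain ⟨t, rfl⟩ := exists_eq_add_smul_of_chordSide_eq_zero hAB h
  have hBA : 0 < ‖B - A‖ ^ 2 := by positivity [sub_ne_zero.2 hAB.symm]
  have ht : 0 ≤ t * (1 - t) := by
    have := norm_add_smul_sub_sq hA hB t
    nlinarith [pow_le_one₀ (norm_nonneg _) hw (n := 2)]
  rw [segment_eq_image']
  exact ⟨t, ⟨by nlinarith, by nlinarith⟩, rfl⟩

lemma eq_or_eq_of_chordSide_eq_zero (hA : ‖A‖ = 1) (hB : ‖B‖ = 1) (hAB : A ≠ B)
    (hw : ‖w‖ = 1) (h : chordSide A B w = 0) : w = A ∨ w = B := by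
  obtain ⟨t, rfl⟩ := exists_eq_add_smul_of_chordSide_eq_zero hAB h
  have hBA : ‖B - A‖ ^ 2 ≠ 0 := by simpa [sub_eq_zero] using hAB.symm
  have ht : t * (1 - t) = 0 := by
    have := norm_add_smul_sub_sq hA hB t
    rw [hw] at this
    exact (mul_eq_zero.1 (by linear_combination this)).resolve_right hBA
  rcases mul_eq_zero.1 ht with ht | ht
  · left; simp [ht]
  · right; simp [show t = 1 by linarith]

end ChordGeometry

section ChordCells

variable {ι : Type*} {A B : ι → ℂ} {z : ℂ}
  (hA : ∀ i, ‖A i‖ = 1) (hB : ∀ i, ‖B i‖ = 1) (hAB : ∀ i, A i ≠ B i)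
include hA hB hAB

lemma chordSide_ne_zero_of_mem_closedBall_diff {w : ℂ}
    (hw : w ∈ closedBall 0 1 \ ⋃ i, segment ℝ (A i) (B i)) (i : ι) :
    chordSide (A i) (B i) w ≠ 0 := fun h =>
  hw.2 <| mem_iUnion_of_mem i <| mem_segment_of_chordSide_eq_zero (hA i) (hB i) (hAB i)
    (mem_closedBall_zero_iff.1 hw.1) h

lemma connectedComponentIn_closedBall_diff_chords
    (hz : z ∈ closedBall 0 1 \ ⋃ i, segment ℝ (A i) (B i)) :
    connectedComponentIn (closedBall 0 1 \ ⋃ i, segment ℝ (A i) (B i)) z =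
      closedBall 0 1 ∩ {w | ∀ i, 0 < chordSide (A i) (B i) w * chordSide (A i) (B i) z} := by
  have hne {w : ℂ} := chordSide_ne_zero_of_mem_closedBall_diff (w := w) hA hB hAB
  set U := closedBall (0 : ℂ) 1 \ ⋃ i, segment ℝ (A i) (B i)
  apply subset_antisymm
  · intro w hw
    refine ⟨(connectedComponentIn_subset _ _ hw).1, fun i => ?_⟩
    by_contra hneg
    obtain ⟨v, hv, hv0⟩ : 0 ∈ chordSide (A i) (B i) '' connectedComponentIn U z := by
      have hf := (continuous_chordSide (A i) (B i)).continuousOn (s := connectedComponentIn U z)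
      have hzc := mem_connectedComponentIn hz
      rcases mul_nonpos_iff.1 (not_lt.1 hneg) with h | h
      · exact isPreconnected_connectedComponentIn.intermediate_value hzc hw hf ⟨h.2, h.1⟩
      · exact isPreconnected_connectedComponentIn.intermediate_value hw hzc hf h
    exact hne (connectedComponentIn_subset _ _ hv) i hv0
  · have hconv : Convex ℝ (closedBall (0 : ℂ) 1 ∩
        {w | ∀ i, 0 < chordSide (A i) (B i) w * chordSide (A i) (B i) z}) := by
      refine (convex_closedBall 0 1).inter fun u hu v hv a b ha hb hab i => ?_
      rw [chordSide_smul_add_smul _ _ _ _ hab, add_mul, mul_assoc, mul_assoc]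
      rcases ha.eq_or_lt with rfl | ha
      · obtain rfl : b = 1 := by linarith
        simpa using hv i
      · exact add_pos_of_pos_of_nonneg (mul_pos ha (hu i)) (mul_nonneg hb (hv i).le)
    refine hconv.isPreconnected.subset_connectedComponentIn
      ⟨hz.1, fun i => mul_self_pos.2 (hne hz i)⟩ fun w hw => ⟨hw.1, ?_⟩
    simp only [mem_iUnion, not_exists]
    intro i hi
    simpa [chordSide_eq_zero_of_mem_segment hi] using hw.2 i

lemma closure_connectedComponentIn_closedBall_diff_chords
    (hz : z ∈ closedBall 0 1 \ ⋃ i, segment ℝ (A i) (B i)) :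
    closure (connectedComponentIn (closedBall 0 1 \ ⋃ i, segment ℝ (A i) (B i)) z) =
      closedBall 0 1 ∩ {w | ∀ i, 0 ≤ chordSide (A i) (B i) w * chordSide (A i) (B i) z} := by
  rw [connectedComponentIn_closedBall_diff_chords hA hB hAB hz]
  apply subset_antisymm
  · refine closure_minimal (fun w hw => ⟨hw.1, fun i => (hw.2 i).le⟩) ?_
    rw [ofPred_forall]
    exact isClosed_closedBall.inter <| isClosed_iInter fun i =>
      isClosed_le continuous_const ((continuous_chordSide _ _).mul continuous_const)
  · rintro w ⟨hw, hwz⟩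
    refine closure_mono ?_ (segment_subset_closure_openSegment (right_mem_segment ℝ z w))
    rintro _ ⟨a, b, ha, hb, hab, rfl⟩
    refine ⟨(convex_closedBall 0 1).openSegment_subset hz.1 hw ⟨a, b, ha, hb, hab, rfl⟩,
      fun i => ?_⟩
    rw [chordSide_smul_add_smul _ _ _ _ hab, add_mul, mul_assoc, mul_assoc]
    exact add_pos_of_pos_of_nonneg
      (mul_pos ha (mul_self_pos.2 (chordSide_ne_zero_of_mem_closedBall_diff hA hB hAB hz i)))
      (mul_nonneg hb.le (hwz i))

end ChordCells

section Trigonometry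

lemma sin_add_sin_sub_sin (u v : ℝ) :
    sin (2 * v) + sin (2 * (u - v)) - sin (2 * u) = 4 * sin (u - v) * sin u * sin v := by
  simp only [sin_two_mul, sin_sub, cos_sub]
  linear_combination (-2 * sin v * cos v) * sin_sq_add_cos_sq u
    + (2 * sin u * cos u) * sin_sq_add_cos_sq v

lemma chordSide_exp_mul_I (a b t : ℝ) :
    chordSide (Complex.exp (a * Complex.I)) (Complex.exp (b * Complex.I))
      (Complex.exp (t * Complex.I)) =
      4 * sin ((b - a) / 2) * sin ((t - a) / 2) * sin ((t - b) / 2) := by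
  have h := sin_add_sin_sub_sin ((t - a) / 2) ((t - b) / 2)
  rw [show 2 * ((t - b) / 2) = t - b by ring, show 2 * ((t - a) / 2) = t - a by ring,
    show (t - a) / 2 - (t - b) / 2 = (b - a) / 2 by ring, show 2 * ((b - a) / 2) = b - a by ring]
    at h
  simp only [chordSide_eq, Complex.sub_re, Complex.sub_im, Complex.exp_ofReal_mul_I_re,
    Complex.exp_ofReal_mul_I_im]
  rw [← h]
  simp only [sin_sub]
  ring

lemma sin_pi_mul_pos {x : ℝ} (h0 : 0 < x) (h1 : x < 1) : 0 < sin (π * x) :=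
  sin_pos_of_pos_of_lt_pi (by positivity) (by nlinarith [pi_pos])

lemma sin_pi_mul_neg {x : ℝ} (h0 : -1 < x) (h1 : x < 0) : sin (π * x) < 0 :=
  sin_neg_of_neg_of_neg_pi_lt (by nlinarith [pi_pos]) (by nlinarith [pi_pos])

lemma sin_pi_mul_ne_zero_of_abs_lt {d : ℝ} (h0 : d ≠ 0) (h1 : |d| < 1) :
    sin (π * d) ≠ 0 := by
  rw [abs_lt] at h1
  rw [Ne, sin_eq_zero_iff_of_lt_of_lt (by nlinarith [pi_pos]) (by nlinarith [pi_pos])]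
  exact mul_ne_zero pi_ne_zero h0

end Trigonometry

section Circle

lemma rep_mem_Ico (x : 𝕋) : rep x ∈ Ico (0 : ℝ) 1 := by
  simpa [rep] using (AddCircle.equivIco 1 0 x).2

lemma coe_rep (x : 𝕋) : ((rep x : ℝ) : 𝕋) = x := (AddCircle.equivIco 1 0).symm_apply_apply x

lemma emb_eq_toCircle (x : 𝕋) : emb x = AddCircle.toCircle x := by
  conv_rhs => rw [← coe_rep x]
  rw [AddCircle.toCircle_apply_mk, Circle.coe_exp, emb]
  push_cast
  ring_nf

lemma norm_emb (x : 𝕋) : ‖emb x‖ = 1 := by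
  rw [emb_eq_toCircle]
  exact Circle.norm_coe _

lemma emb_injective : Function.Injective emb := fun x y h => by
  rw [emb_eq_toCircle, emb_eq_toCircle] at h
  exact AddCircle.injective_toCircle one_ne_zero (Circle.coe_injective h)

lemma emb_coe (t : ℝ) : emb (t : 𝕋) = Complex.exp ((2 * π * t : ℝ) * Complex.I) := by
  rw [emb_eq_toCircle, AddCircle.toCircle_apply_mk, Circle.coe_exp, div_one]

lemma dbl_coe (t : ℝ) : dbl (t : 𝕋) = ((2 * t : ℝ) : 𝕋) := by
  rw [dbl, two_mul, AddCircle.coe_add]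

lemma dbl_coe_half (s : ℝ) : dbl ((s / 2 : ℝ) : 𝕋) = s := by
  rw [dbl_coe, mul_div_cancel₀ _ two_ne_zero]

lemma dbl_coe_half_add_half (s : ℝ) : dbl ((s / 2 + 1 / 2 : ℝ) : 𝕋) = s := by
  rw [dbl_coe, show 2 * (s / 2 + 1 / 2) = s + 1 by ring, AddCircle.coe_add_period]

end Circle

section Dynamics

lemma dbl_tldL (α u : 𝕋) : dbl (tldL α u) = u := by
  unfold tldL
  split_ifs <;> simp only [dbl_coe_half, dbl_coe_half_add_half, coe_rep]

lemma dbl_tldR (α u : 𝕋) : dbl (tldR α u) = u := by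
  unfold tldR
  split_ifs <;> simp only [dbl_coe_half, dbl_coe_half_add_half, coe_rep]

lemma dbl_star1 (α : 𝕋) : dbl (star1 α) = α := by
  rw [star1, dbl_coe_half, coe_rep]

lemma dbl_star2 (α : 𝕋) : dbl (star2 α) = α := by
  rw [star2, dbl_coe_half_add_half, coe_rep]

lemma wtld_true_cons (α : 𝕋) (g : List Bool) (u : 𝕋) :
    wtld α (true :: g) u = tldL α (wtld α g u) := rfl

lemma wtld_false_cons (α : 𝕋) (g : List Bool) (u : 𝕋) :
    wtld α (false :: g) u = tldR α (wtld α g u) := rfl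

lemma iterate_dbl_wtld (α : 𝕋) (g : List Bool) (u : 𝕋) :
    dbl^[g.length] (wtld α g u) = u := by
  induction g with
  | nil => rfl
  | cons b g ih =>
    rw [List.length_cons, Function.iterate_succ_apply]
    cases b
    · rw [wtld_false_cons, dbl_tldR, ih]
    · rw [wtld_true_cons, dbl_tldL, ih]

lemma star1_ne_star2 (α : 𝕋) : star1 α ≠ star2 α := by
  obtain ⟨h0, h1⟩ := rep_mem_Ico α
  rw [star1, star2, Ne, AddCircle.coe_eq_coe_iff_of_mem_Ico (a := 0)
    ⟨by linarith, by linarith⟩ ⟨by linarith, by linarith⟩]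
  linarith

lemma wtld_star1_ne_wtld_star2 (α : 𝕋) (g : List Bool) :
    wtld α g (star1 α) ≠ wtld α g (star2 α) := fun h => star1_ne_star2 α <| by
  simpa only [iterate_dbl_wtld] using congrArg dbl^[g.length] h

lemma wtld_ne_of_not_periodic {α s : 𝕋} (hα : ¬ Periodic' α) (hs : dbl s = α)
    (g : List Bool) : wtld α g s ≠ α := fun h =>
  hα ⟨g.length + 1, by omega, by
    rw [Function.iterate_succ_apply', ← h, iterate_dbl_wtld, h, hs]⟩

lemma disjoint_openArcL_openArcR (α : 𝕋) : Disjoint (openArcL α) (openArcR α) := by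
  rw [Set.disjoint_left]
  rintro _ ⟨t, ⟨ht0, ht1⟩, rfl⟩ ⟨t', ⟨ht0', ht1'⟩, h⟩
  rw [AddCircle.coe_eq_coe_iff_of_mem_Ico (a := rep α / 2)
    ⟨by linarith, by linarith⟩ ⟨by linarith, by linarith⟩] at h
  linarith

lemma exists_tldL_tldR {α u : 𝕋} (hu : u ≠ α) :
    ∃ p ∈ Ioo (rep α / 2) (rep α / 2 + 1 / 2),
      tldL α u = p ∧ tldR α u = ((p + 1 / 2 : ℝ) : 𝕋) := by
  obtain ⟨hα0, hα1⟩ := rep_mem_Ico α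
  obtain ⟨hu0, hu1⟩ := rep_mem_Ico u
  have hne : rep u ≠ rep α := fun h => hu (by rw [← coe_rep u, h, coe_rep])
  rcases hne.lt_or_gt with h | h
  · have hR : ((rep u / 2 : ℝ) : 𝕋) ∈ openArcR α :=
      ⟨rep u / 2 + 1 / 2 - rep α / 2, ⟨by linarith, by linarith⟩, by
        dsimp only
        rw [show rep α / 2 + 1 / 2 + (rep u / 2 + 1 / 2 - rep α / 2) = rep u / 2 + 1 by ring,
          AddCircle.coe_add_period]⟩
    refine ⟨rep u / 2 + 1 / 2, ⟨by linarith, by linarith⟩, ?_, ?_⟩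
    · rw [tldL, if_neg (Set.disjoint_right.1 (disjoint_openArcL_openArcR α) hR)]
    · rw [tldR, if_pos hR, show rep u / 2 + 1 / 2 + 1 / 2 = rep u / 2 + 1 by ring,
        AddCircle.coe_add_period]
  · have hL : ((rep u / 2 : ℝ) : 𝕋) ∈ openArcL α :=
      ⟨rep u / 2 - rep α / 2, ⟨by linarith, by linarith⟩, by simp⟩
    refine ⟨rep u / 2, ⟨by linarith, by linarith⟩, if_pos hL, ?_⟩
    rw [tldR, if_neg (Set.disjoint_left.1 (disjoint_openArcL_openArcR α) hL)]

end Dynamics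

-- `a, b` and `a', b'` stand for the sides of `t` and of `x` relative to the two child chords.
lemma sign_pattern_of_mul_nonneg {a b a' b' : ℝ} (ha' : a' ≠ 0) (hb' : b' ≠ 0)
    (hx : 0 < a' ∨ 0 < b') (ht : 0 < a ∨ 0 < b) (h : 0 ≤ a * b * (a' * b'))
    (hcross : a * a' < 0 ∨ b * b' < 0) :
    (a' < 0 ∧ b ≤ 0) ∨ (b' < 0 ∧ a ≤ 0) := by
  rcases ha'.lt_or_gt with ha' | ha' <;> rcases hb'.lt_or_gt with hb' | hb'
  · rcases hx with hx | hx <;> linarith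
  · refine .inl ⟨ha', not_lt.1 fun hb => ?_⟩
    rcases hcross with hc | hc
    · have ha : 0 < a := by nlinarith
      nlinarith [mul_pos ha hb, mul_neg_of_neg_of_pos ha' hb']
    · nlinarith
  · refine .inr ⟨hb', not_lt.1 fun ha => ?_⟩
    rcases hcross with hc | hc
    · nlinarith
    · have hb : 0 < b := by nlinarith
      nlinarith [mul_pos ha hb, mul_neg_of_pos_of_neg ha' hb']
  · rcases hcross with hc | hc
    · have ha : a < 0 := by nlinarith
      have hb : 0 < b := ht.resolve_left ha.not_gt
      nlinarith [mul_neg_of_neg_of_pos ha hb, mul_pos ha' hb']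
    · have hb : b < 0 := by nlinarith
      have ha : 0 < a := ht.resolve_right hb.not_gt
      nlinarith [mul_neg_of_pos_of_neg ha hb, mul_pos ha' hb']

lemma mul_mul_mul_self_nonneg_iff {κ a b : ℝ} (hκ : κ ≠ 0) :
    0 ≤ κ * a * (κ * b) ↔ 0 ≤ a * b := by
  rw [mul_mul_mul_comm, mul_nonneg_iff_of_pos_left (mul_self_pos.2 hκ)]

lemma mul_nonneg_iff_mul_nonneg_of_mul_pos {a b c : ℝ} (h : 0 < b * c) :
    0 ≤ a * c ↔ 0 ≤ a * b := by
  rw [← mul_nonneg_iff_of_pos_right h, show a * c * (b * c) = a * b * (c * c) by ring,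
    mul_nonneg_iff_of_pos_right (mul_self_pos.2 (right_ne_zero_of_mul h.ne'))]

noncomputable def arcSide (p q t : ℝ) : ℝ := sin (π * (t - p)) * sin (π * (t - q))

section ArcSide

lemma chordSide_emb_coe (p q t : ℝ) :
    chordSide (emb p) (emb q) (emb t) = 4 * sin (π * (q - p)) * arcSide p q t := by
  rw [emb_coe, emb_coe, emb_coe, chordSide_exp_mul_I, arcSide]
  ring_nf

lemma arcSide_two_mul (p q t : ℝ) :
    arcSide (2 * p) (2 * q) (2 * t) =
      4 * arcSide p q t * arcSide (p + 1 / 2) (q + 1 / 2) t := by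
  simp only [arcSide, show ∀ r, π * (2 * t - 2 * r) = 2 * (π * (t - r)) from fun r => by ring,
    show ∀ r, π * (t - (r + 1 / 2)) = π * (t - r) - π / 2 from fun r => by ring,
    sin_two_mul, sin_sub_pi_div_two]
  ring

lemma arcSide_add_int (p q t : ℝ) (k : ℤ) : arcSide p q (t + k) = arcSide p q t := by
  simp only [arcSide, show ∀ r, π * (t + k - r) = π * (t - r) + k * π from fun r => by ring,
    sin_add_int_mul_pi]
  rw [mul_mul_mul_comm, ← mul_zpow]
  norm_num

variable {c p q : ℝ} (hp : p ∈ Ioo c (c + 1 / 2)) (hq : q ∈ Ioo c (c + 1 / 2))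
include hp hq

lemma sin_two_pi_pos_of_arcSide_nonpos {t : ℝ} (h : arcSide p q t ≤ 0) :
    0 < sin (2 * π * (t - c)) := by
  obtain ⟨hp0, hp1⟩ := hp
  obtain ⟨hq0, hq1⟩ := hq
  set v := Int.fract (t - c)
  have hv0 : 0 ≤ v := Int.fract_nonneg _
  have hv1 : v < 1 := Int.fract_lt_one _
  have ht : t = c + v + ⌊t - c⌋ := by linarith [Int.fract_add_floor (t - c)]
  rw [ht, arcSide_add_int, arcSide] at h
  rw [ht, show 2 * π * (c + v + ⌊t - c⌋ - c) = 2 * π * v + ⌊t - c⌋ * (2 * π) by ring,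
    sin_add_int_mul_two_pi]
  by_contra hsin
  have hv : v ≤ 0 ∨ 1 / 2 ≤ v := by
    by_contra! hv
    refine hsin ?_
    rw [show 2 * π * v = π * (2 * v) by ring]
    exact sin_pi_mul_pos (by linarith) (by linarith)
  rcases hv with hv | hv
  · have := sin_pi_mul_neg (x := c + v - p) (by linarith) (by linarith)
    have := sin_pi_mul_neg (x := c + v - q) (by linarith) (by linarith)
    nlinarith
  · have := sin_pi_mul_pos (x := c + v - p) (by linarith) (by linarith)
    have := sin_pi_mul_pos (x := c + v - q) (by linarith) (by linarith)
    nlinarith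

lemma sin_two_pi_neg_of_arcSide_add_half_nonpos {t : ℝ}
    (h : arcSide (p + 1 / 2) (q + 1 / 2) t ≤ 0) : sin (2 * π * (t - c)) < 0 := by
  have h' : arcSide p q (t - 1 / 2) ≤ 0 := by
    simpa only [arcSide, sub_sub, add_comm (1 / 2 : ℝ)] using h
  have := sin_two_pi_pos_of_arcSide_nonpos hp hq h'
  rwa [show 2 * π * (t - 1 / 2 - c) = 2 * π * (t - c) - π by ring, sin_sub_pi, neg_pos] at this

lemma arcSide_pos_or_arcSide_add_half_pos (t : ℝ) :
    0 < arcSide p q t ∨ 0 < arcSide (p + 1 / 2) (q + 1 / 2) t := by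
  by_contra! h
  exact (sin_two_pi_pos_of_arcSide_nonpos hp hq h.1).not_gt
    (sin_two_pi_neg_of_arcSide_add_half_nonpos hp hq h.2)

lemma sin_two_pi_mul_neg_of_crosses_child {x t : ℝ} (hxL : arcSide p q x ≠ 0)
    (hxR : arcSide (p + 1 / 2) (q + 1 / 2) x ≠ 0)
    (hparent : 0 ≤ arcSide p q t * arcSide (p + 1 / 2) (q + 1 / 2) t *
      (arcSide p q x * arcSide (p + 1 / 2) (q + 1 / 2) x))
    (hcross : arcSide p q t * arcSide p q x < 0 ∨
      arcSide (p + 1 / 2) (q + 1 / 2) t * arcSide (p + 1 / 2) (q + 1 / 2) x < 0) :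
    sin (2 * π * (x - c)) * sin (2 * π * (t - c)) < 0 := by
  rcases sign_pattern_of_mul_nonneg hxL hxR (arcSide_pos_or_arcSide_add_half_pos hp hq x)
    (arcSide_pos_or_arcSide_add_half_pos hp hq t) hparent hcross with ⟨hx, ht⟩ | ⟨hx, ht⟩
  · exact mul_neg_of_pos_of_neg (sin_two_pi_pos_of_arcSide_nonpos hp hq hx.le)
      (sin_two_pi_neg_of_arcSide_add_half_nonpos hp hq ht)
  · exact mul_neg_of_neg_of_pos (sin_two_pi_neg_of_arcSide_add_half_nonpos hp hq hx.le)
      (sin_two_pi_pos_of_arcSide_nonpos hp hq ht)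

end ArcSide

lemma forall_length_eq_succ_iff {β : Type*} {m : ℕ} {P : List β → Prop} :
    (∀ g : List β, g.length = m + 1 → P g) ↔
      ∀ g : List β, g.length = m → ∀ b, P (b :: g) :=
  ⟨fun h g hg b => h _ (by rw [List.length_cons, hg]), fun h g hg => by
    cases g with
    | nil => simp at hg
    | cons b g => exact h g (by simpa using hg) b⟩

noncomputable def wordSide (α : 𝕋) (g : List Bool) (y : 𝕋) : ℝ :=
  chordSide (emb (wtld α g (star1 α))) (emb (wtld α g (star2 α))) (emb y)

section WordSide

variable {α : 𝕋}

lemma wordSide_ne_zero {g : List Bool} {y : 𝕋} (h : dbl^[g.length + 1] y ≠ α) :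
    wordSide α g y ≠ 0 := fun h0 => by
  rcases eq_or_eq_of_chordSide_eq_zero (norm_emb _) (norm_emb _)
      (emb_injective.ne (wtld_star1_ne_wtld_star2 α g)) (norm_emb y) h0 with hy | hy <;>
    apply h <;> rw [Function.iterate_succ_apply', emb_injective hy, iterate_dbl_wtld]
  exacts [dbl_star1 α, dbl_star2 α]

lemma diskMinus_eq (α : 𝕋) (n : ℕ) :
    diskMinus α n = closedBall 0 1 \ ⋃ g : {g : List Bool // g.length = n},
      segment ℝ (emb (wtld α g (star1 α))) (emb (wtld α g (star2 α))) := by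
  rw [diskMinus, chordsUnion, biUnion_eq_iUnion]
  rfl

lemma mem_iff_of_isGCS {n : ℕ} {C : Set 𝕋} {x : 𝕋} (hC : IsGCS α n C) (hxC : x ∈ C)
    (hx : ∀ g : List Bool, g.length = n → wordSide α g x ≠ 0) (y : 𝕋) :
    y ∈ C ↔ ∀ g : List Bool, g.length = n → 0 ≤ wordSide α g y * wordSide α g x := by
  obtain ⟨z, hz, rfl⟩ := hC
  rw [diskMinus_eq] at hz hxC ⊢
  set A : {g : List Bool // g.length = n} → ℂ := fun g => emb (wtld α g (star1 α))
  set B : {g : List Bool // g.length = n} → ℂ := fun g => emb (wtld α g (star2 α))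
  have hA : ∀ g, ‖A g‖ = 1 := fun _ => norm_emb _
  have hB : ∀ g, ‖B g‖ = 1 := fun _ => norm_emb _
  have hAB : ∀ g, A g ≠ B g := fun g => emb_injective.ne (wtld_star1_ne_wtld_star2 α g)
  have hmem : ∀ y, emb y ∈ closure (connectedComponentIn
      (closedBall 0 1 \ ⋃ g, segment ℝ (A g) (B g)) z) ↔
      ∀ g : List Bool, (hg : g.length = n) →
        0 ≤ wordSide α g y * chordSide (A ⟨g, hg⟩) (B ⟨g, hg⟩) z := by
    intro y
    rw [closure_connectedComponentIn_closedBall_diff_chords hA hB hAB hz]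
    simp [norm_emb, wordSide, A, B]
  have hxz : ∀ g : List Bool, (hg : g.length = n) →
      0 < wordSide α g x * chordSide (A ⟨g, hg⟩) (B ⟨g, hg⟩) z := fun g hg =>
    ((hmem x).1 hxC g hg).lt_of_ne' <| mul_ne_zero (hx g hg) <|
      chordSide_ne_zero_of_mem_closedBall_diff hA hB hAB hz ⟨g, hg⟩
  exact (hmem y).trans <|
    forall₂_congr fun g hg => mul_nonneg_iff_mul_nonneg_of_mul_pos (hxz g hg)

lemma exists_wordSide_cons (hα : ¬ Periodic' α) (g : List Bool) :
    ∃ p ∈ Ioo (rep α / 2) (rep α / 2 + 1 / 2),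
    ∃ q ∈ Ioo (rep α / 2) (rep α / 2 + 1 / 2), ∃ κ ≠ 0, ∃ κ' ≠ 0, ∀ t : ℝ,
      wordSide α (true :: g) t = κ * arcSide p q t ∧
      wordSide α (false :: g) t = κ * arcSide (p + 1 / 2) (q + 1 / 2) t ∧
      wordSide α g (dbl t) = κ' * (arcSide p q t * arcSide (p + 1 / 2) (q + 1 / 2) t) := by
  obtain ⟨p, hp, hLp, hRp⟩ := exists_tldL_tldR (wtld_ne_of_not_periodic hα (dbl_star1 α) g)
  obtain ⟨q, hq, hLq, hRq⟩ := exists_tldL_tldR (wtld_ne_of_not_periodic hα (dbl_star2 α) g)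
  have h1 : wtld α g (star1 α) = ((2 * p : ℝ) : 𝕋) := by
    rw [← dbl_tldL α (wtld α g _), hLp, dbl_coe]
  have h2 : wtld α g (star2 α) = ((2 * q : ℝ) : 𝕋) := by
    rw [← dbl_tldL α (wtld α g _), hLq, dbl_coe]
  have hpq : q - p ≠ 0 :=
    sub_ne_zero.2 fun h => wtld_star1_ne_wtld_star2 α g (by rw [h1, h2, h])
  have hpq' : |q - p| < 1 / 2 := by
    rw [abs_lt]; constructor <;> linarith [hp.1, hp.2, hq.1, hq.2]
  refine ⟨p, hp, q, hq, 4 * sin (π * (q - p)), ?_, 4 * sin (π * (2 * q - 2 * p)) * 4, ?_,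
    fun t => ⟨?_, ?_, ?_⟩⟩
  · exact mul_ne_zero four_ne_zero (sin_pi_mul_ne_zero_of_abs_lt hpq (by linarith))
  · refine mul_ne_zero (mul_ne_zero four_ne_zero (sin_pi_mul_ne_zero_of_abs_lt ?_ ?_))
      four_ne_zero
    · rw [← mul_sub]; exact mul_ne_zero two_ne_zero hpq
    · rw [← mul_sub, abs_mul, abs_two]; linarith
  · rw [wordSide, wtld_true_cons, wtld_true_cons, hLp, hLq, chordSide_emb_coe]
  · rw [wordSide, wtld_false_cons, wtld_false_cons, hRp, hRq, chordSide_emb_coe,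
      add_sub_add_right_eq_sub]
  · rw [wordSide, h1, h2, dbl_coe, chordSide_emb_coe, arcSide_two_mul]
    ring

lemma wordSide_dbl_mul_nonneg (hα : ¬ Periodic' α) (g : List Bool) {t x : ℝ}
    (h : ∀ b, 0 ≤ wordSide α (b :: g) t * wordSide α (b :: g) x) :
    0 ≤ wordSide α g (dbl t) * wordSide α g (dbl x) := by
  obtain ⟨p, -, q, -, κ, hκ, κ', hκ', hside⟩ := exists_wordSide_cons hα g
  have hL := h true
  have hR := h false
  rw [(hside t).1, (hside x).1, mul_mul_mul_self_nonneg_iff hκ] at hL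
  rw [(hside t).2.1, (hside x).2.1, mul_mul_mul_self_nonneg_iff hκ] at hR
  rw [(hside t).2.2, (hside x).2.2, mul_mul_mul_self_nonneg_iff hκ', mul_mul_mul_comm]
  exact mul_nonneg hL hR

lemma sin_two_pi_mul_neg_of_crosses_child_wordSide (hα : ¬ Periodic' α) (g : List Bool)
    {t x : ℝ} (hx : ∀ b, wordSide α (b :: g) x ≠ 0)
    (hparent : 0 ≤ wordSide α g (dbl t) * wordSide α g (dbl x))
    (hcross : ∃ b, wordSide α (b :: g) t * wordSide α (b :: g) x < 0) :
    sin (2 * π * (x - rep α / 2)) * sin (2 * π * (t - rep α / 2)) < 0 := by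
  obtain ⟨p, hp, q, hq, κ, hκ, κ', hκ', hside⟩ := exists_wordSide_cons hα g
  have hxL := hx true
  have hxR := hx false
  rw [(hside x).1] at hxL
  rw [(hside x).2.1] at hxR
  rw [(hside t).2.2, (hside x).2.2, mul_mul_mul_self_nonneg_iff hκ'] at hparent
  refine sin_two_pi_mul_neg_of_crosses_child hp hq (right_ne_zero_of_mul hxL)
    (right_ne_zero_of_mul hxR) hparent ?_
  obtain ⟨b, hb⟩ := hcross
  simp only [← not_le] at hb ⊢
  cases b
  · rw [(hside t).2.1, (hside x).2.1, mul_mul_mul_self_nonneg_iff hκ] at hb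
    exact .inr hb
  · rw [(hside t).1, (hside x).1, mul_mul_mul_self_nonneg_iff hκ] at hb
    exact .inl hb

end WordSide

/-- generalized cylinder sets behave well under forward iteration:
`h(GCS_n(x)) = GCS_{n-1}(h(x))` (stated via the defining property of the two generalized
cylinder sets, which are unique by uniqueness of the containing member of `GCS_n`). -/
theorem stmt_14 (α : 𝕋) (hα : ¬ Periodic' α) (n : ℕ) (hn : 1 ≤ n) (x : 𝕋)
    (hx : dbl^[n + 1] x ≠ α) (C C' : Set 𝕋)
    (hC : IsGCS α n C) (hxC : x ∈ C)
    (hC' : IsGCS α (n - 1) C') (hxC' : dbl x ∈ C') :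
    dbl '' C = C' := by
  obtain ⟨m, rfl⟩ : ∃ m, n = m + 1 := ⟨n - 1, by omega⟩
  rw [Nat.add_sub_cancel] at hC'
  obtain ⟨x, rfl⟩ := QuotientAddGroup.mk_surjective x
  have hxn : ∀ g : List Bool, g.length = m + 1 → wordSide α g x ≠ 0 :=
    fun g hg => wordSide_ne_zero (by rwa [hg])
  have hmem := mem_iff_of_isGCS hC hxC hxn
  have hmem' := mem_iff_of_isGCS hC' hxC' fun g hg =>
    wordSide_ne_zero (by rwa [hg, ← Function.iterate_succ_apply])
  have hcross : ∀ t : ℝ, dbl (t : 𝕋) ∈ C' → (t : 𝕋) ∉ C →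
      sin (2 * π * (x - rep α / 2)) * sin (2 * π * (t - rep α / 2)) < 0 := by
    intro t ht htC
    rw [hmem, forall_length_eq_succ_iff] at htC
    push Not at htC
    obtain ⟨g, hg, b, hb⟩ := htC
    exact sin_two_pi_mul_neg_of_crosses_child_wordSide hα g
      (fun b => hxn _ (by rw [List.length_cons, hg])) ((hmem' _).1 ht g hg) ⟨b, hb⟩
  apply subset_antisymm
  · rintro _ ⟨y, hy, rfl⟩
    obtain ⟨t, rfl⟩ := QuotientAddGroup.mk_surjective y
    rw [hmem, forall_length_eq_succ_iff] at hy
    exact (hmem' _).2 fun g hg => wordSide_dbl_mul_nonneg hα g (hy g hg)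
  · intro w hw
    obtain ⟨s, rfl⟩ := QuotientAddGroup.mk_surjective w
    by_contra hs
    have h0 := hcross (s / 2) (by rwa [dbl_coe_half]) fun h => hs ⟨_, h, dbl_coe_half s⟩
    have h1 := hcross (s / 2 + 1 / 2) (by rwa [dbl_coe_half_add_half]) fun h =>
      hs ⟨_, h, dbl_coe_half_add_half s⟩
    rw [show 2 * π * (s / 2 + 1 / 2 - rep α / 2) = 2 * π * (s / 2 - rep α / 2) + π by ring,
      sin_add_pi, mul_neg] at h1
    linarith
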